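/- arXiv:1408.1904 — 2 statements merged into one kernel-verified Lean document; each statement's English description precedes it below -/
import Mathlib

section
/- For all natural numbers n, i and all positive integers p, the polynomial congruence ℒ_{n+p}^i(X) ≡ (−1)^p X^p · ℒ_n^i(X) (mod p) holds in ℤ[X]. -/
open Polynomial MvPolynomial

/-- The scaled generalized Laguerre polynomial `ℒ_n^α(X) = n! · L_n^α(X) ∈ ℤ[X]`. -/
noncomputable def sLag (n α : ℕ) : Polynomial ℤ :=
  ∑ j ∈ Finset.range (n + 1),
    Polynomial.C ((-1 : ℤ) ^ j * ((n.factorial / j.factorial : ℕ) : ℤ) *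
      ((n + α).choose (n - j) : ℤ)) * Polynomial.X ^ j

/-!
The coefficient of `X^k` in `ℒ_{k+r}^α` is `(-1)^k (k+1)^{(r)} C(k+α+r, r)`, with `x^{(r)}` the
rising factorial. A rising factorial is a polynomial in its base, so it only depends on the base
mod `p`; `C(k+α+r, r)` is not an integer polynomial in `k`, but the identity
`(k+1)^{(r)} C(k+α+r, r) = C(k+r, r) (k+α+1)^{(r)}` lets us shift `k` by `p` one rising factorial
at a time. For `k < p` the rising factorial `(k+1)^{(n+p-k)}` has the factor `p`.
-/

def laguerreCoeff (α k r : ℕ) : ℕ :=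
  (k + 1).ascFactorial r * (k + α + r).choose r

lemma coeff_sLag (m α k : ℕ) :
    (sLag m α).coeff k = if k ≤ m then
      (-1 : ℤ) ^ k * ((m.factorial / k.factorial : ℕ) : ℤ) * ((m + α).choose (m - k) : ℤ)
    else 0 := by
  simp only [sLag, Polynomial.finsetSum_coeff, Polynomial.coeff_C_mul, Polynomial.coeff_X_pow,
    mul_ite, mul_one, mul_zero, Finset.sum_ite_eq, Finset.mem_range, Nat.lt_succ_iff]

lemma coeff_sLag_add (α k r : ℕ) :
    (sLag (k + r) α).coeff k = (-1 : ℤ) ^ k * laguerreCoeff α k r := by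
  rw [coeff_sLag, if_pos (Nat.le_add_right k r), ← Nat.ascFactorial_eq_div,
    Nat.add_sub_cancel_left, laguerreCoeff, add_right_comm k r α]
  push_cast
  ring

lemma coeff_sLag_of_lt {m k : ℕ} (α : ℕ) (h : m < k) : (sLag m α).coeff k = 0 := by
  rw [coeff_sLag, if_neg (Nat.not_le.mpr h)]

lemma ascPochhammer_eval_add_modEq (r : ℕ) (x p : ℤ) :
    (ascPochhammer ℤ r).eval (x + p) ≡ (ascPochhammer ℤ r).eval x [ZMOD p] :=
  Int.modEq_iff_dvd.mpr (by simpa using sub_dvd_eval_sub x (x + p) (ascPochhammer ℤ r))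

lemma ascFactorial_add_modEq (a p r : ℕ) :
    ((a + p).ascFactorial r : ℤ) ≡ a.ascFactorial r [ZMOD p] := by
  simpa only [← ascPochhammer_nat_eq_natCast_ascFactorial, Nat.cast_add]
    using ascPochhammer_eval_add_modEq r a p

lemma dvd_ascFactorial_of_le_of_lt {a p r : ℕ} (hap : a ≤ p) (hpr : p < a + r) : p ∣ a.ascFactorial r := by
  -- the factors `a - p, …, a - p + r - 1` of the shifted product run through `0`
  have hzero : (ascPochhammer ℤ r).eval (a - p : ℤ) = 0 := by
    rw [← neg_sub, ← Nat.cast_sub hap]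
    exact ascPochhammer_eval_neg_coe_nat_of_lt (by omega)
  have hmod := ascPochhammer_eval_add_modEq r (a - p) p
  rw [sub_add_cancel, hzero, ascPochhammer_nat_eq_natCast_ascFactorial] at hmod
  exact_mod_cast Int.modEq_zero_iff_dvd.mp hmod

lemma choose_mul_ascFactorial_comm (x y r : ℕ) :
    (x + r).choose r * (y + 1).ascFactorial r = (x + 1).ascFactorial r * (y + r).choose r := by
  rw [Nat.ascFactorial_eq_factorial_mul_choose, Nat.ascFactorial_eq_factorial_mul_choose]
  ring

lemma laguerreCoeff_add_modEq (α k r p : ℕ) :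
    (laguerreCoeff α (k + p) r : ℤ) ≡ laguerreCoeff α k r [ZMOD p] := by
  have hshift : k + p + α + 1 = (k + α + 1) + p := by ring
  calc (laguerreCoeff α (k + p) r : ℤ)
      = (k + p + r).choose r * ((k + α + 1) + p).ascFactorial r := by
        rw [laguerreCoeff, ← choose_mul_ascFactorial_comm, hshift]; push_cast; rfl
    _ ≡ (k + p + r).choose r * (k + α + 1).ascFactorial r [ZMOD p] :=
        (ascFactorial_add_modEq _ p r).mul_left _
    _ = ((k + 1) + p).ascFactorial r * (k + α + r).choose r := by
        rw [add_right_comm k 1 p]; exact_mod_cast choose_mul_ascFactorial_comm (k + p) (k + α) r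
    _ ≡ (k + 1).ascFactorial r * (k + α + r).choose r [ZMOD p] :=
        (ascFactorial_add_modEq _ p r).mul_right _
    _ = laguerreCoeff α k r := by rw [laguerreCoeff]; push_cast; rfl

lemma coeff_sLag_add_modEq (n α p k : ℕ) :
    (sLag (n + p) α).coeff (p + k) ≡ (-1 : ℤ) ^ p * (sLag n α).coeff k [ZMOD p] := by
  rcases le_or_gt k n with hkn | hnk
  · obtain ⟨r, rfl⟩ := Nat.exists_eq_add_of_le hkn
    rw [show k + r + p = (k + p) + r by ring, add_comm p k, coeff_sLag_add, coeff_sLag_add,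
      pow_add, mul_comm ((-1 : ℤ) ^ k) ((-1 : ℤ) ^ p), mul_assoc]
    exact ((laguerreCoeff_add_modEq α k r p).mul_left _).mul_left _
  · rw [coeff_sLag_of_lt α hnk, coeff_sLag_of_lt α (by omega), mul_zero]

lemma dvd_coeff_sLag_add_of_lt {n p k : ℕ} (α : ℕ) (hkp : k < p) :
    (p : ℤ) ∣ (sLag (n + p) α).coeff k := by
  obtain ⟨r, hr⟩ := Nat.exists_eq_add_of_le (show k ≤ n + p by omega)
  rw [hr, coeff_sLag_add, laguerreCoeff, Nat.cast_mul]
  exact (Int.natCast_dvd_natCast.mpr (dvd_ascFactorial_of_le_of_lt hkp (by omega))).mul_right _ |>.mul_left _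

theorem stmt_12_general (n i : ℕ) (p : ℕ) :
    ∀ k : ℕ, (p : ℤ) ∣
      (sLag (n + p) i - Polynomial.C ((-1 : ℤ) ^ p) * Polynomial.X ^ p * sLag n i).coeff k := by
  intro k
  rw [Polynomial.coeff_sub, mul_assoc, Polynomial.coeff_C_mul, coeff_X_pow_mul']
  split_ifs with hpk
  · obtain ⟨j, rfl⟩ := Nat.exists_eq_add_of_le hpk
    rw [Nat.add_sub_cancel_left]
    exact (coeff_sLag_add_modEq n i p j).symm.dvd
  · rw [mul_zero, sub_zero]
    exact dvd_coeff_sLag_add_of_lt i (Nat.lt_of_not_le hpk)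

theorem stmt_12 (n i : ℕ) (p : ℕ) (hp : 0 < p) :
    ∀ k : ℕ, (p : ℤ) ∣
      (sLag (n + p) i - Polynomial.C ((-1 : ℤ) ^ p) * Polynomial.X ^ p * sLag n i).coeff k :=
  stmt_12_general n i p
end

section
/- For all natural numbers n, m, substituting Y := X in the two-variable Laguerre polynomial gives 𝕃_{n,m}(X,X) = ℒ_{n+m}^0(X) in ℤ[X]; that is, n!·m!·L_{n,m}(x,x) = (n+m)!·L_{n+m}(x), equivalently L_{n,m}(x,x) = C(n+m, n)·L_{n+m}(x). -/
/-! Compare the coefficients of `X ^ k` after multiplying them by `k !`, which clears the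
factorial quotients. The `X ^ s * Y ^ i` term of `𝕃_{n,m}` with `i + s = k` then telescopes to
`(-1) ^ k * C(m, i) * C(n, s) * (m + n)!`, Vandermonde's identity sums these to
`(-1) ^ k * C(m + n, k) * (m + n)!`, and that is also `k !` times the `X ^ k`-coefficient of
`ℒ_{n+m}^0`. -/

open Polynomial MvPolynomial

/-- The scaled two-variable Laguerre polynomial
`𝕃_{n,m}(X,Y) = n!·m!·L_{n,m}(X,Y) ∈ ℤ[X,Y]`, with `X = X 0` and `Y = X 1`. -/
noncomputable def sLag2 (n m : ℕ) : MvPolynomial (Fin 2) ℤ :=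
  ∑ i ∈ Finset.range (m + 1), ∑ s ∈ Finset.range (n + 1),
    MvPolynomial.C ((-1 : ℤ) ^ (i + s) * ((m.factorial / i.factorial : ℕ) : ℤ) *
        ((n.factorial / s.factorial : ℕ) : ℤ) *
        ((m + n).choose (m - i) : ℤ) * ((n + i).choose (n - s) : ℤ)) *
      MvPolynomial.X 0 ^ s * MvPolynomial.X 1 ^ i

open Finset Nat

def sLag2Coeff (n m i s : ℕ) : ℕ :=
  (m ! / i !) * (n ! / s !) * (m + n).choose (m - i) * (n + i).choose (n - s)

theorem Nat.factorial_div_factorial_eq_choose_mul_factorial {i m : ℕ} (h : i ≤ m) :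
    m ! / i ! = m.choose i * (m - i)! := by
  refine Nat.div_eq_of_eq_mul_left i.factorial_pos ?_
  rw [← Nat.choose_mul_factorial_mul_factorial h]
  ring

theorem sLag2Coeff_mul_factorial {n m i s : ℕ} (hi : i ≤ m) (hs : s ≤ n) :
    sLag2Coeff n m i s * (i + s)! = m.choose i * n.choose s * (m + n)! := by
  have hmn : (m + n).choose (m - i) * (m - i)! * (n + i)! = (m + n)! := by
    simpa [show m + n - (m - i) = n + i by omega] using
      Nat.choose_mul_factorial_mul_factorial (show m - i ≤ m + n by omega)
  have hni : (n + i).choose (n - s) * (n - s)! * (i + s)! = (n + i)! := by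
    simpa [show n + i - (n - s) = i + s by omega] using
      Nat.choose_mul_factorial_mul_factorial (show n - s ≤ n + i by omega)
  rw [sLag2Coeff, factorial_div_factorial_eq_choose_mul_factorial hi,
    factorial_div_factorial_eq_choose_mul_factorial hs, ← hmn, ← hni]
  ring

theorem Nat.add_choose_eq_sum_range_sum_range (m n k : ℕ) :
    (m + n).choose k =
      ∑ i ∈ range (m + 1), ∑ s ∈ range (n + 1),
        if k = i + s then m.choose i * n.choose s else 0 := by
  rw [Nat.add_choose_eq, ← sum_product', ← sum_filter]
  refine (sum_subset (fun p hp => ?_) fun p hp hp' => ?_).symm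
  · simp only [mem_filter, mem_product, mem_range, HasAntidiagonal.mem_antidiagonal] at hp ⊢
    omega
  · simp only [mem_filter, mem_product, mem_range, HasAntidiagonal.mem_antidiagonal] at hp hp'
    rcases (show m < p.1 ∨ n < p.2 by omega) with h | h
    · rw [Nat.choose_eq_zero_of_lt h, zero_mul]
    · rw [Nat.choose_eq_zero_of_lt h, mul_zero]

theorem coeff_sLag_mul_factorial (N k : ℕ) :
    (sLag N 0).coeff k * k ! = (-1) ^ k * N.choose k * N ! := by
  simp only [sLag, finsetSum_coeff, coeff_C_mul_X_pow, add_zero, sum_ite_eq, mem_range]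
  split_ifs with hk
  · have hdiv : ((N ! / k ! : ℕ) : ℤ) * k ! = N ! := by
      exact_mod_cast Nat.div_mul_cancel (Nat.factorial_dvd_factorial (by omega))
    rw [Nat.choose_symm (by omega)]
    linear_combination (-1) ^ k * (N.choose k : ℤ) * hdiv
  · rw [Nat.choose_eq_zero_of_lt (by omega)]
    simp

theorem aeval_sLag2 (n m : ℕ) :
    MvPolynomial.aeval (fun _ : Fin 2 => (Polynomial.X : ℤ[X])) (sLag2 n m) =
      ∑ i ∈ range (m + 1), ∑ s ∈ range (n + 1),
        Polynomial.C ((-1) ^ (i + s) * (sLag2Coeff n m i s : ℤ)) * Polynomial.X ^ (i + s) := by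
  simp only [sLag2, sLag2Coeff, map_sum, map_mul, map_pow, MvPolynomial.aeval_C,
    MvPolynomial.aeval_X, Polynomial.algebraMap_eq, pow_add, Nat.cast_mul]
  refine sum_congr rfl fun i _ => sum_congr rfl fun s _ => ?_
  ring

theorem coeff_aeval_sLag2_mul_factorial (n m k : ℕ) :
    (MvPolynomial.aeval (fun _ : Fin 2 => (Polynomial.X : ℤ[X])) (sLag2 n m)).coeff k * k ! =
      (-1) ^ k * (m + n).choose k * (m + n)! := by
  rw [aeval_sLag2, add_choose_eq_sum_range_sum_range]
  simp only [finsetSum_coeff, coeff_C_mul_X_pow, sum_mul, mul_sum, Nat.cast_sum]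
  refine sum_congr rfl fun i hi => sum_congr rfl fun s hs => ?_
  split_ifs with hk
  · subst hk
    rw [mul_assoc, ← Nat.cast_mul, sLag2Coeff_mul_factorial (mem_range_succ_iff.mp hi)
      (mem_range_succ_iff.mp hs)]
    push_cast
    ring
  · simp

/-- Substituting `Y := X` gives `𝕃_{n,m}(X,X) = ℒ_{n+m}^0(X)`,
i.e. `n!·m!·L_{n,m}(x,x) = (n+m)!·L_{n+m}(x)`,
equivalently `L_{n,m}(x,x) = C(n+m,n)·L_{n+m}(x)`. -/
theorem stmt_16 (n m : ℕ) :
    MvPolynomial.aeval (fun _ : Fin 2 => (Polynomial.X : Polynomial ℤ)) (sLag2 n m) =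
      sLag (n + m) 0 := by
  ext k
  refine mul_right_cancel₀ (Nat.cast_ne_zero.mpr k.factorial_ne_zero : (k ! : ℤ) ≠ 0) ?_
  rw [coeff_aeval_sLag2_mul_factorial, coeff_sLag_mul_factorial, add_comm m n]
end
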